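/- A minimal topological dynamical system (X,T) is either diam-mean equicontinuous or diam-mean sensitive. -/

import Mathlib

/-!
If `(X, T)` is not diam-mean equicontinuous, some point `x` and some `ε > 0` are such that every
closed ball `B` around `x` satisfies `ε ≤ D̄ {i | ε < diam (Tⁱ B)}`. By minimality the orbit of `x`
enters any non-empty open `U`, say `Tⁿ x ∈ U`, and by continuity `Tⁿ B ⊆ U` for a small enough
ball `B`. Then `diam (Tⁱ⁺ⁿ B) ≤ diam (Tⁱ U)`, and shifting a set of times by `n` does not decrease
its upper density, so `U` witnesses sensitivity with constant `ε / 2`.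
-/

open Filter Metric Set
open scoped Classical

noncomputable def lowerDensity (S : Set ℕ) : ℝ :=
  Filter.atTop.liminf (fun n => (((Finset.range (n + 1)).filter (fun i => i ∈ S)).card : ℝ) / (n + 1))

noncomputable def upperDensity (S : Set ℕ) : ℝ :=
  Filter.atTop.limsup (fun n => (((Finset.range (n + 1)).filter (fun i => i ∈ S)).card : ℝ) / (n + 1))

open scoped Topology

noncomputable def partialDensity (S : Set ℕ) (n : ℕ) : ℝ :=
  (((Finset.range (n + 1)).filter (fun i => i ∈ S)).card : ℝ) / (n + 1)

lemma upperDensity_eq_limsup (S : Set ℕ) : upperDensity S = limsup (partialDensity S) atTop :=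
  rfl

section PartialDensity

variable (S : Set ℕ)

lemma partialDensity_nonneg (n : ℕ) : 0 ≤ partialDensity S n := by
  unfold partialDensity
  positivity

lemma partialDensity_le_one (n : ℕ) : partialDensity S n ≤ 1 := by
  rw [partialDensity, div_le_one (by positivity)]
  exact_mod_cast (Finset.card_filter_le _ _).trans (Finset.card_range (n + 1)).le

lemma isBoundedUnder_le_partialDensity : atTop.IsBoundedUnder (· ≤ ·) (partialDensity S) :=
  isBoundedUnder_of ⟨1, partialDensity_le_one S⟩

lemma isBoundedUnder_ge_partialDensity : atTop.IsBoundedUnder (· ≥ ·) (partialDensity S) :=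
  isBoundedUnder_of ⟨0, partialDensity_nonneg S⟩

lemma isCoboundedUnder_le_partialDensity : atTop.IsCoboundedUnder (· ≤ ·) (partialDensity S) :=
  (isBoundedUnder_ge_partialDensity S).isCoboundedUnder_le

end PartialDensity

lemma partialDensity_mono {S S' : Set ℕ} (h : S ⊆ S') (n : ℕ) :
    partialDensity S n ≤ partialDensity S' n := by
  unfold partialDensity
  gcongr

lemma upperDensity_mono {S S' : Set ℕ} (h : S ⊆ S') : upperDensity S ≤ upperDensity S' :=
  limsup_le_limsup (Eventually.of_forall (partialDensity_mono h))
    (isCoboundedUnder_le_partialDensity S) (isBoundedUnder_le_partialDensity S')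

lemma card_filter_range_add_le (S : Set ℕ) (m n : ℕ) :
    ((Finset.range (n + m)).filter (· ∈ S)).card ≤
      n + ((Finset.range m).filter (· ∈ (· + n) ⁻¹' S)).card := by
  rw [Finset.range_add, Finset.filter_union, Finset.filter_map]
  refine (Finset.card_union_le _ _).trans (add_le_add ?_ ?_)
  · exact (Finset.card_filter_le _ _).trans (Finset.card_range n).le
  · rw [Finset.card_map]
    refine Finset.card_le_card (Finset.monotone_filter_right _ fun i _ hi => ?_)
    simpa [add_comm] using hi

lemma partialDensity_add_le (S : Set ℕ) (m n : ℕ) :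
    partialDensity S (m + n) ≤ partialDensity ((· + n) ⁻¹' S) m + n / (m + 1) := by
  have hcard := card_filter_range_add_le S (m + 1) n
  rw [show n + (m + 1) = m + n + 1 by omega] at hcard
  unfold partialDensity
  rw [← add_div, add_comm _ (n : ℝ)]
  push_cast
  exact div_le_div₀ (by positivity) (by exact_mod_cast hcard) (by positivity) (by linarith)

lemma upperDensity_le_upperDensity_preimage_add (S : Set ℕ) (n : ℕ) :
    upperDensity S ≤ upperDensity ((· + n) ⁻¹' S) := by
  set c : ℕ → ℝ := fun m => n / (m + 1)
  have hc : Tendsto c atTop (𝓝 0) := by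
    refine ((tendsto_const_div_atTop_nhds_zero_nat (n : ℝ)).comp
      (tendsto_add_atTop_nat 1)).congr fun m => ?_
    simp [c]
  rw [upperDensity_eq_limsup, upperDensity_eq_limsup, ← limsup_nat_add _ n]
  calc limsup (fun m => partialDensity S (m + n)) atTop
      ≤ limsup (partialDensity ((· + n) ⁻¹' S) + c) atTop :=
        limsup_le_limsup (Eventually.of_forall fun m => partialDensity_add_le S m n)
          (isBoundedUnder_of ⟨0, fun m => partialDensity_nonneg S (m + n)⟩).isCoboundedUnder_le
          (isBoundedUnder_le_add (isBoundedUnder_le_partialDensity _) hc.isBoundedUnder_le)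
    _ ≤ limsup (partialDensity ((· + n) ⁻¹' S)) atTop + limsup c atTop :=
        limsup_add_le (isBoundedUnder_ge_partialDensity _) (isBoundedUnder_le_partialDensity _)
          hc.isBoundedUnder_ge.isCoboundedUnder_le hc.isBoundedUnder_le
    _ = limsup (partialDensity ((· + n) ⁻¹' S)) atTop := by rw [hc.limsup_eq, add_zero]

lemma exists_image_iterate_closedBall_subset {X : Type*} [PseudoMetricSpace X] {T : X → X}
    (hT : Continuous T) {x : X} (hx : Dense (range fun n : ℕ => T^[n] x)) {U : Set X}
    (hU : IsOpen U) (hUne : U.Nonempty) : ∃ n : ℕ, ∃ δ > 0, T^[n] '' closedBall x δ ⊆ U := by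
  obtain ⟨_, ⟨n, rfl⟩, hn⟩ := hx.exists_mem_open hU hUne
  have hnhds : T^[n] ⁻¹' U ∈ 𝓝 x := (hU.preimage (hT.iterate n)).mem_nhds hn
  obtain ⟨δ, hδ, hball⟩ := nhds_basis_closedBall.mem_iff.mp hnhds
  exact ⟨n, δ, hδ, image_subset_iff.mpr hball⟩

lemma upperDensity_diam_le_of_image_iterate_subset {X : Type*} [PseudoMetricSpace X]
    [BoundedSpace X] {T : X → X} {A U : Set X} {n : ℕ} (h : T^[n] '' A ⊆ U) (ε : ℝ) :
    upperDensity {i | ε < diam (T^[i] '' A)} ≤ upperDensity {i | ε < diam (T^[i] '' U)} := by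
  refine (upperDensity_le_upperDensity_preimage_add _ n).trans (upperDensity_mono fun i hi => ?_)
  have hsub : T^[i + n] '' A ⊆ T^[i] '' U := by
    rw [Function.iterate_add, image_comp]
    exact image_mono h
  exact lt_of_lt_of_le hi (diam_mono hsub (Bornology.IsBounded.all _))

theorem minimal_diamMean_dichotomy {X : Type*} [MetricSpace X] [CompactSpace X]
    (T : X → X) (hT : Continuous T)
    (hmin : ∀ x : X, Dense (Set.range fun n : ℕ => T^[n] x)) :
    (∀ x : X, ∀ ε > 0, ∃ δ > 0,
        upperDensity {i : ℕ | ε < Metric.diam ((T^[i]) '' Metric.closedBall x δ)} < ε) ∨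
    (∃ ε > 0, ∀ U : Set X, IsOpen U → U.Nonempty →
        ε < upperDensity {i : ℕ | ε < Metric.diam ((T^[i]) '' U)}) := by
  refine or_iff_not_imp_left.mpr fun hequi => ?_
  push Not at hequi
  obtain ⟨x, ε, hε, hx⟩ := hequi
  refine ⟨ε / 2, half_pos hε, fun U hU hUne => ?_⟩
  obtain ⟨n, δ, hδ, hsub⟩ := exists_image_iterate_closedBall_subset hT (hmin x) hU hUne
  calc ε / 2 < ε := half_lt_self hε
    _ ≤ upperDensity {i | ε < diam (T^[i] '' closedBall x δ)} := hx δ hδ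
    _ ≤ upperDensity {i | ε < diam (T^[i] '' U)} :=
        upperDensity_diam_le_of_image_iterate_subset hsub ε
    _ ≤ upperDensity {i | ε / 2 < diam (T^[i] '' U)} :=
        upperDensity_mono fun _ hi => (half_lt_self hε).trans hi
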